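/- Let k ∈ ℂ and z₀ ∈ ℂ, and let U be an open neighborhood of z₀. Suppose g, M₁₁, M₂₁ : ℂ → ℂ are real-differentiable on U with g nonvanishing on U, and at z₀ the equations ∂̄M₁₁(z₀) = Q₁₂(z₀)·M₂₁(z₀) and ∂M₂₁(z₀) + i·k·M₂₁(z₀) = Q₂₁(z₀)·M₁₁(z₀) hold. Suppose w : ℂ → ℂ is real-differentiable on U, the functions ∂w and ∂̄w are real-differentiable at z₀ with ∂̄(∂w)(z₀) = ∂(∂̄w)(z₀), and on all of U the equation ∂w(z) + i·k·w(z) = M₁₁(z)/g(z) − 1 holds. Then the function F(z) = ∂̄w(z) − M₂₁(z)/g(z) satisfies ∂F(z₀) + i·k·F(z₀) = 0; that is, (∂ + ik)(∂̄w − γ^{−1/2}M₂₁) = 0 at z₀. -/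

import Mathlib

/-! Applying `∂̄` to `∂w + ikw = M₁₁/g - 1` and commuting the mixed derivatives gives
`∂(∂̄w) = ∂̄(M₁₁/g) - ik ∂̄w`. Subtracting `∂(M₂₁/g) + ik M₂₁/g` and expanding both quotient rules,
the `ik ∂̄w` terms cancel and what is left is `g⁻¹ ((∂̄M₁₁ - Q₁₂M₂₁) - (∂M₂₁ + ikM₂₁ - Q₂₁M₁₁))`,
which vanishes by the two equations at `z₀`. -/

open Complex

/-- Wirtinger derivative ∂f(z) = (1/2)(Df(z)(1) - i·Df(z)(i)), with Df the real Fréchet derivative. -/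
noncomputable def dz (f : ℂ → ℂ) (z : ℂ) : ℂ :=
  (1/2 : ℂ) * (fderiv ℝ f z 1 - Complex.I * fderiv ℝ f z Complex.I)

/-- Wirtinger derivative ∂̄f(z) = (1/2)(Df(z)(1) + i·Df(z)(i)). -/
noncomputable def dzbar (f : ℂ → ℂ) (z : ℂ) : ℂ :=
  (1/2 : ℂ) * (fderiv ℝ f z 1 + Complex.I * fderiv ℝ f z Complex.I)

/-- Matrix potential entry Q₁₂(z) = -∂g(z)/g(z). -/
noncomputable def Q12 (g : ℂ → ℂ) (z : ℂ) : ℂ := - dz g z / g z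

/-- Matrix potential entry Q₂₁(z) = -∂̄g(z)/g(z). -/
noncomputable def Q21 (g : ℂ → ℂ) (z : ℂ) : ℂ := - dzbar g z / g z

/-- The unimodular exponential e(z,k) = exp(i(zk + z̄k̄)). -/
noncomputable def efun (z k : ℂ) : ℂ :=
  Complex.exp (Complex.I * (z * k + (starRingEnd ℂ) z * (starRingEnd ℂ) k))

section Div

variable {𝕜 E 𝕜' : Type*} [NontriviallyNormedField 𝕜] [NormedAddCommGroup E] [NormedSpace 𝕜 E]
  [NontriviallyNormedField 𝕜'] [NormedAlgebra 𝕜 𝕜'] {f h : E → 𝕜'} {f' h' : E →L[𝕜] 𝕜'} {x : E}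

theorem HasFDerivAt.fun_div (hf : HasFDerivAt f f' x) (hh : HasFDerivAt h h' x) (hx : h x ≠ 0) :
    HasFDerivAt (fun y => f y / h y) ((h x ^ 2)⁻¹ • (h x • f' - f x • h')) x := by
  simp_rw [div_eq_mul_inv]
  refine (hf.fun_mul ((hasFDerivAt_inv' hx).comp x hh)).congr_fderiv ?_
  ext v
  simp only [ContinuousLinearMap.neg_comp, smul_neg, Function.comp_apply, add_apply, neg_apply,
    smul_apply, ContinuousLinearMap.comp_apply, ContinuousLinearMap.mulLeftRight_apply,
    smul_eq_mul, sub_apply]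
  field_simp
  ring

end Div

section Wirtinger

variable {f h : ℂ → ℂ} {z : ℂ}

theorem fderiv_fun_div_apply (hf : DifferentiableAt ℝ f z) (hh : DifferentiableAt ℝ h z)
    (hz : h z ≠ 0) (v : ℂ) :
    fderiv ℝ (fun x => f x / h x) z v
      = (fderiv ℝ f z v * h z - f z * fderiv ℝ h z v) / h z ^ 2 := by
  rw [(hf.hasFDerivAt.fun_div hh.hasFDerivAt hz).fderiv]
  simp only [smul_apply, sub_apply, smul_eq_mul]
  ring

theorem Filter.EventuallyEq.dzbar_eq (hfh : f =ᶠ[nhds z] h) : dzbar f z = dzbar h z := by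
  rw [dzbar, dzbar, hfh.fderiv_eq]

theorem dz_fun_sub (hf : DifferentiableAt ℝ f z) (hh : DifferentiableAt ℝ h z) :
    dz (fun x => f x - h x) z = dz f z - dz h z := by
  simp only [dz, fderiv_fun_sub hf hh, sub_apply]
  ring

theorem dzbar_fun_sub (hf : DifferentiableAt ℝ f z) (hh : DifferentiableAt ℝ h z) :
    dzbar (fun x => f x - h x) z = dzbar f z - dzbar h z := by
  simp only [dzbar, fderiv_fun_sub hf hh, sub_apply]
  ring

theorem dzbar_sub_const (c : ℂ) : dzbar (fun x => f x - c) z = dzbar f z := by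
  simp only [dzbar, fderiv_sub_const]

theorem dzbar_const_mul (hf : DifferentiableAt ℝ f z) (c : ℂ) :
    dzbar (fun x => c * f x) z = c * dzbar f z := by
  simp only [dzbar, fderiv_const_mul hf c, smul_apply, smul_eq_mul]
  ring

theorem dz_fun_div (hf : DifferentiableAt ℝ f z) (hh : DifferentiableAt ℝ h z) (hz : h z ≠ 0) :
    dz (fun x => f x / h x) z = (dz f z * h z - f z * dz h z) / h z ^ 2 := by
  simp only [dz, fderiv_fun_div_apply hf hh hz]
  field_simp
  ring

theorem dzbar_fun_div (hf : DifferentiableAt ℝ f z) (hh : DifferentiableAt ℝ h z)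
    (hz : h z ≠ 0) :
    dzbar (fun x => f x / h x) z = (dzbar f z * h z - f z * dzbar h z) / h z ^ 2 := by
  simp only [dzbar, fderiv_fun_div_apply hf hh hz]
  field_simp
  ring

end Wirtinger

theorem stmt13_general (k z₀ : ℂ) (U : Set ℂ) (hU : IsOpen U) (hz₀ : z₀ ∈ U)
    (g M₁₁ M₂₁ w : ℂ → ℂ)
    (hg : ∀ z ∈ U, DifferentiableAt ℝ g z)
    (hM11 : ∀ z ∈ U, DifferentiableAt ℝ M₁₁ z)
    (hM21 : ∀ z ∈ U, DifferentiableAt ℝ M₂₁ z)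
    (hg0 : ∀ z ∈ U, g z ≠ 0)
    (h1 : dzbar M₁₁ z₀ = Q12 g z₀ * M₂₁ z₀)
    (h2 : dz M₂₁ z₀ + Complex.I * k * M₂₁ z₀ = Q21 g z₀ * M₁₁ z₀)
    (hw : ∀ z ∈ U, DifferentiableAt ℝ w z)
    (hdbarw : DifferentiableAt ℝ (dzbar w) z₀)
    (hmixed : dzbar (dz w) z₀ = dz (dzbar w) z₀)
    (heq : ∀ z ∈ U, dz w z + Complex.I * k * w z = M₁₁ z / g z - 1) :
    dz (fun z => dzbar w z - M₂₁ z / g z) z₀ +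
      Complex.I * k * (dzbar w z₀ - M₂₁ z₀ / g z₀) = 0 := by
  have hgz₀ := hg0 z₀ hz₀
  have hM11g : DifferentiableAt ℝ (fun z => M₁₁ z / g z) z₀ :=
    ((hM11 z₀ hz₀).hasFDerivAt.fun_div (hg z₀ hz₀).hasFDerivAt hgz₀).differentiableAt
  have hM21g : DifferentiableAt ℝ (fun z => M₂₁ z / g z) z₀ :=
    ((hM21 z₀ hz₀).hasFDerivAt.fun_div (hg z₀ hz₀).hasFDerivAt hgz₀).differentiableAt
  have hdzw : dz w =ᶠ[nhds z₀] fun z => (M₁₁ z / g z - 1) - Complex.I * k * w z :=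
    Filter.eventually_of_mem (hU.mem_nhds hz₀) fun z hz => eq_sub_of_add_eq (heq z hz)
  have hdzbar_dzw : dzbar (dz w) z₀
      = dzbar (fun z => M₁₁ z / g z) z₀ - Complex.I * k * dzbar w z₀ := by
    rw [hdzw.dzbar_eq, dzbar_fun_sub (hM11g.sub_const 1) ((hw z₀ hz₀).const_mul _),
      dzbar_sub_const, dzbar_const_mul (hw z₀ hz₀)]
  rw [dz_fun_sub hdbarw hM21g, ← hmixed, hdzbar_dzw,
    dzbar_fun_div (hM11 z₀ hz₀) (hg z₀ hz₀) hgz₀, dz_fun_div (hM21 z₀ hz₀) (hg z₀ hz₀) hgz₀]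
  rw [Q12] at h1
  rw [Q21] at h2
  field_simp at h1 h2 ⊢
  linear_combination h1 - h2

theorem stmt13 (k z₀ : ℂ) (U : Set ℂ) (hU : IsOpen U) (hz₀ : z₀ ∈ U)
    (g M₁₁ M₂₁ w : ℂ → ℂ)
    (hg : ∀ z ∈ U, DifferentiableAt ℝ g z)
    (hM11 : ∀ z ∈ U, DifferentiableAt ℝ M₁₁ z)
    (hM21 : ∀ z ∈ U, DifferentiableAt ℝ M₂₁ z)
    (hg0 : ∀ z ∈ U, g z ≠ 0)
    (h1 : dzbar M₁₁ z₀ = Q12 g z₀ * M₂₁ z₀)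
    (h2 : dz M₂₁ z₀ + Complex.I * k * M₂₁ z₀ = Q21 g z₀ * M₁₁ z₀)
    (hw : ∀ z ∈ U, DifferentiableAt ℝ w z)
    (hdw : DifferentiableAt ℝ (dz w) z₀)
    (hdbarw : DifferentiableAt ℝ (dzbar w) z₀)
    (hmixed : dzbar (dz w) z₀ = dz (dzbar w) z₀)
    (heq : ∀ z ∈ U, dz w z + Complex.I * k * w z = M₁₁ z / g z - 1) :
    dz (fun z => dzbar w z - M₂₁ z / g z) z₀ +
      Complex.I * k * (dzbar w z₀ - M₂₁ z₀ / g z₀) = 0 :=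
  stmt13_general k z₀ U hU hz₀ g M₁₁ M₂₁ w hg hM11 hM21 hg0 h1 h2 hw hdbarw hmixed heq
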